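/- arXiv:1301.5045 — 2 statements merged into one kernel-verified Lean document; each statement's English description precedes it below -/
import Mathlib

section
/- Under Hypothesis (H), write Q = t(y)·T(x,y) with t in k[y] the content and T the primitive part of Q with respect to x; let t* and T* be the squarefree parts of t and T with respect to y (so that Q* = t*·T*). For each natural number i let N_i in k[x,y] be defined by D_x^i(f) = N_i/(Q·(T*)^i) where f = P/Q, and set H = −D_y(Q)/Q^- − ρ·t*·D_y(T*) for a fixed ρ in ℕ. If u in k(x)[y] and η_0, …, η_ρ in k(x) satisfy Σ_{i=0}^{ρ} η_i·N_i·(T*)^{ρ−i} = Q*·D_y(u) + (D_y(Q*) + H)·u, then deg_y(u) ≤ d_y^- + ρ·deg_y(T*). -/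
open Polynomial

noncomputable section

/-- A map is a derivation: it is additive and satisfies the Leibniz rule. -/
def IsDeriv {F : Type*} [CommRing F] (D : F → F) : Prop :=
  (∀ a b, D (a + b) = D a + D b) ∧ ∀ a b, D (a * b) = a * D b + b * D a

/-- Degree in `x` of an element of `k[x][y]` (inner variable `x`, outer variable `y`). -/
def degX {k : Type*} [Field k] (Q : Polynomial (Polynomial k)) : ℕ :=
  Q.support.sup fun i => (Q.coeff i).natDegree

/-- Partial derivative with respect to `x` on `k[x][y]`. -/
def derivX {k : Type*} [Field k] (Q : Polynomial (Polynomial k)) : Polynomial (Polynomial k) :=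
  Q.sum fun i a => Polynomial.C (Polynomial.derivative a) * Polynomial.X ^ i

/-- The embedding `k[x][y] → k(x)(y)`. -/
def toF {k : Type*} [Field k] : Polynomial (Polynomial k) →+* RatFunc (RatFunc k) :=
  (algebraMap (Polynomial (RatFunc k)) (RatFunc (RatFunc k))).comp
    (Polynomial.mapRingHom (algebraMap (Polynomial k) (RatFunc k)))

/-- The embedding `k(x) → k(x)(y)`. -/
def ratToF {k : Type*} [Field k] : RatFunc k →+* RatFunc (RatFunc k) :=
  (algebraMap (Polynomial (RatFunc k)) (RatFunc (RatFunc k))).comp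
    (Polynomial.C : RatFunc k →+* Polynomial (RatFunc k))

/-- The embedding `k(x)[y] → k(x)(y)`. -/
def kyToF {k : Type*} [Field k] : Polynomial (RatFunc k) →+* RatFunc (RatFunc k) :=
  algebraMap (Polynomial (RatFunc k)) (RatFunc (RatFunc k))

/-- The embedding `k[x][y] → k(x)[y]`. -/
def toKy {k : Type*} [Field k] : Polynomial (Polynomial k) →+* Polynomial (RatFunc k) :=
  Polynomial.mapRingHom (algebraMap (Polynomial k) (RatFunc k))

/-- The embedding `k[y] → k[x][y]` (a polynomial in `y` viewed in `k[x][y]`). -/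
def yToXY {k : Type*} [Field k] : Polynomial k →+* Polynomial (Polynomial k) :=
  Polynomial.mapRingHom (Polynomial.C : k →+* Polynomial k)

/-- The Hermite matrix associated with a factorisation `Q = Qs * Qneg`, with respect to the
monomial bases: its columns are the coefficient vectors (in `y`, coefficients in `k[x]`) of
`Qs * D_y(y^j) - E * y^j` for `j < dm` (where `E = Qs * D_y(Qneg) / Qneg`) and of
`Qneg * y^j` for `j < dy - dm`. -/
def hermiteMat {k : Type*} [Field k] (Qs Qneg E : Polynomial (Polynomial k)) (dy dm : ℕ) :
    Matrix (Fin dy) (Fin dy) (Polynomial k) :=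
  Matrix.of fun i j =>
    if (j : ℕ) < dm then
      (Qs * Polynomial.derivative (Polynomial.X ^ (j : ℕ)) - E * Polynomial.X ^ (j : ℕ)).coeff i
    else
      (Qneg * Polynomial.X ^ ((j : ℕ) - dm)).coeff i

/-!
Write `n = deg_y u` and `e = d_y⁻ + ρ·deg_y T*`. The Euler remainder `y·F' - (deg F)·F` of a
polynomial `F` has degree `< deg F`. Multiplying the equation by `y·Q⁻` and substituting the
definition of `H` therefore turns its right-hand side into `(n - e)·Q·u` plus terms of degree
`< deg Q + n`: the indicial equation at `y = ∞` is `n = e`. On the other side, `D_x` does not raise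
`y`-degrees, so every `Nᵢ / (Q·T*ⁱ)` stays proper and `∑ ηᵢ·Nᵢ·T*^(ρ-i)` has degree
`< deg Q + ρ·deg T*`. After the multiplication by `y·Q⁻` this is `< deg Q + e + 1`, so `n ≤ e`.
-/

section Degree

variable {R : Type*}

theorem degree_X_mul_derivative_sub_lt [CommRing R] (F : R[X]) :
    (X * derivative F - (F.natDegree : R[X]) * F).degree < (F.natDegree : WithBot ℕ) := by
  rw [degree_lt_iff_coeff_zero]
  intro m hm
  rw [coeff_sub, ← C_eq_natCast, coeff_C_mul]
  rcases m with _ | m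
  · simp [Nat.le_zero.mp hm]
  · rw [coeff_X_mul, coeff_derivative]
    rcases hm.lt_or_eq with h | h
    · simp [coeff_eq_zero_of_natDegree_lt h]
    · rw [h]; push_cast; ring

theorem degree_mul_lt_of_degree_lt_of_natDegree_le [Semiring R] {F G : R[X]} {d m : ℕ}
    (hF : F.degree < d) (hG : G.natDegree ≤ m) : (F * G).degree < ↑(d + m) := by
  rcases eq_or_ne F 0 with rfl | hF0
  · simp
  have hFd : F.natDegree < d := (natDegree_lt_iff_degree_lt hF0).2 hF
  exact degree_le_natDegree.trans_lt (Nat.cast_lt.2 (natDegree_mul_le.trans_lt (by omega)))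

theorem degree_X_mul_mul_sub_lt [CommRing R] [IsDomain R] {Q S N a T H : R[X]} (ρ : ℕ)
    (hQ0 : Q ≠ 0) (hQ : Q = S * N) (hS : S = a * T)
    (hH : H * N = -derivative Q - (ρ • (a * derivative T)) * N) (u : R[X]) :
    (X * N * (S * derivative u + (derivative S + H) * u)
      - C ((u.natDegree : R) - (N.natDegree + ρ * T.natDegree : ℕ)) * Q * u).degree
      < ↑(Q.natDegree + u.natDegree) := by
  have hS0 : S ≠ 0 := left_ne_zero_of_mul (hQ ▸ hQ0)
  have hN0 : N ≠ 0 := right_ne_zero_of_mul (hQ ▸ hQ0)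
  have hT0 : T ≠ 0 := right_ne_zero_of_mul (hS ▸ hS0)
  have hq : Q.natDegree = S.natDegree + N.natDegree := by rw [hQ, natDegree_mul hS0 hN0]
  have hs : S.natDegree = a.natDegree + T.natDegree := by
    rw [hS, natDegree_mul (left_ne_zero_of_mul (hS ▸ hS0)) hT0]
  have hW : X * N * (S * derivative u + (derivative S + H) * u)
      - C ((u.natDegree : R) - (N.natDegree + ρ * T.natDegree : ℕ)) * Q * u
      = (X * derivative u - (u.natDegree : R[X]) * u) * Q
        + (X * derivative S - (S.natDegree : R[X]) * S) * (N * u)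
        - (X * derivative Q - (Q.natDegree : R[X]) * Q) * u
        - ρ • ((X * derivative T - (T.natDegree : R[X]) * T) * (a * N * u)) := by
    have hqR : (Q.natDegree : R[X]) = S.natDegree + N.natDegree := by
      rw [hq, Nat.cast_add]
    rw [C_sub, C_eq_natCast, C_eq_natCast]
    rw [nsmul_eq_mul] at hH ⊢
    subst hQ hS
    push_cast
    linear_combination (X * u) * hH - (a * T * N * u) * hqR
  have h1 := degree_mul_lt_of_degree_lt_of_natDegree_le (degree_X_mul_derivative_sub_lt u)
    le_rfl (G := Q)
  have h2 := degree_mul_lt_of_degree_lt_of_natDegree_le (degree_X_mul_derivative_sub_lt S)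
    (natDegree_mul_le (p := N) (q := u))
  have h3 := degree_mul_lt_of_degree_lt_of_natDegree_le (degree_X_mul_derivative_sub_lt Q)
    le_rfl (G := u)
  have h4 := degree_mul_lt_of_degree_lt_of_natDegree_le (degree_X_mul_derivative_sub_lt T)
    (m := a.natDegree + N.natDegree + u.natDegree) (G := a * N * u) (by
      have := natDegree_mul_le (p := a) (q := N)
      have := natDegree_mul_le (p := a * N) (q := u)
      omega)
  rw [hW]
  refine (degree_sub_le _ _).trans_lt (max_lt ((degree_sub_le _ _).trans_lt (max_lt
    ((degree_add_le _ _).trans_lt (max_lt ?_ ?_)) h3)) ((degree_smul_le _ _).trans_lt ?_))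
  · convert h1 using 2; omega
  · convert h2 using 2; omega
  · convert h4 using 2; omega

theorem natDegree_solution_le_of_degree_lt [CommRing R] [IsDomain R] [CharZero R]
    {Q S N a T H L u : R[X]} (ρ : ℕ) (hQ0 : Q ≠ 0) (hQ : Q = S * N) (hS : S = a * T)
    (hH : H * N = -derivative Q - (ρ • (a * derivative T)) * N)
    (hL : L = S * derivative u + (derivative S + H) * u)
    (hLdeg : L.degree < (Q * T ^ ρ).degree) :
    u.natDegree ≤ N.natDegree + ρ * T.natDegree := by
  rcases eq_or_ne u 0 with rfl | hu0
  · simp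
  by_contra! hlt
  have hN0 : N ≠ 0 := right_ne_zero_of_mul (hQ ▸ hQ0)
  have hT0 : T ≠ 0 := right_ne_zero_of_mul (hS ▸ left_ne_zero_of_mul (hQ ▸ hQ0))
  set c : R := (u.natDegree : R) - (N.natDegree + ρ * T.natDegree : ℕ)
  have hc : c ≠ 0 := sub_ne_zero.2 (Nat.cast_injective.ne hlt.ne')
  have hlead : (C c * Q * u).degree = ↑(Q.natDegree + u.natDegree) := by
    rw [mul_assoc, degree_C_mul hc, degree_mul, degree_eq_natDegree hQ0,
      degree_eq_natDegree hu0, Nat.cast_add]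
  have hlower : (X * N * L - C c * Q * u).degree < (C c * Q * u).degree := by
    rw [hlead, hL]
    exact degree_X_mul_mul_sub_lt ρ hQ0 hQ hS hH u
  have hXNL : (X * N * L).degree = ↑(Q.natDegree + u.natDegree) := by
    rw [← add_sub_cancel (C c * Q * u) (X * N * L), degree_add_eq_left_of_degree_lt hlower,
      hlead]
  have hupper := degree_mul_lt_of_degree_lt_of_natDegree_le
    (hLdeg.trans_eq (degree_eq_natDegree (mul_ne_zero hQ0 (pow_ne_zero ρ hT0))))
    (natDegree_X_mul hN0).le
  rw [mul_comm, hXNL, natDegree_mul hQ0 (pow_ne_zero ρ hT0), natDegree_pow,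
    Nat.cast_lt] at hupper
  omega

end Degree

theorem IsDeriv.map_div {F : Type*} [Field F] {D : F → F} (hD : IsDeriv D) (a : F) {b : F}
    (hb : b ≠ 0) : D (a / b) = (D a * b - a * D b) / b ^ 2 := by
  obtain ⟨c, rfl⟩ : ∃ c, a = c * b := ⟨a / b, (div_mul_cancel₀ a hb).symm⟩
  rw [mul_div_cancel_right₀ c hb, hD.2, eq_div_iff (pow_ne_zero 2 hb)]
  ring

section BivariateDegrees

variable {k : Type*} [Field k]

theorem coeff_derivX (A : Polynomial (Polynomial k)) (n : ℕ) :
    (derivX A).coeff n = derivative (A.coeff n) := by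
  rw [derivX, Polynomial.sum, finsetSum_coeff]
  simp only [coeff_C_mul, coeff_X_pow, mul_ite, mul_one, mul_zero]
  rw [Finset.sum_ite_eq A.support n (fun i => derivative (A.coeff i))]
  split_ifs with h
  · rfl
  · rw [notMem_support_iff.mp h, map_zero]

theorem degree_derivX_le (A : Polynomial (Polynomial k)) : (derivX A).degree ≤ A.degree := by
  rw [degree_le_iff_coeff_zero]
  intro m hm
  rw [coeff_derivX, coeff_eq_zero_of_degree_lt hm, map_zero]

theorem toF_injective : Function.Injective (toF (k := k)) :=
  (RatFunc.algebraMap_injective (RatFunc k)).comp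
    (map_injective _ (RatFunc.algebraMap_injective k))

theorem toKy_injective : Function.Injective (toKy (k := k)) :=
  map_injective _ (RatFunc.algebraMap_injective k)

theorem degree_toKy (A : Polynomial (Polynomial k)) : (toKy A).degree = A.degree :=
  degree_map_eq_of_injective (RatFunc.algebraMap_injective k) A

theorem natDegree_toKy (A : Polynomial (Polynomial k)) : (toKy A).natDegree = A.natDegree :=
  natDegree_map_eq_of_injective (RatFunc.algebraMap_injective k) A

theorem derivative_toKy (A : Polynomial (Polynomial k)) :
    derivative (toKy A) = toKy (derivative A) :=
  derivative_map A _

theorem mul_sq_eq_of_derivation_div {Dx : RatFunc (RatFunc k) → RatFunc (RatFunc k)}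
    (hDx : IsDeriv Dx) (hDxval : ∀ A, Dx (toF A) = toF (derivX A))
    {N D N' D' : Polynomial (Polynomial k)} (hD : D ≠ 0) (hD' : D' ≠ 0)
    (h : Dx (toF N / toF D) = toF N' / toF D') :
    N' * D ^ 2 = (derivX N * D - N * derivX D) * D' := by
  have hDF : toF D ≠ 0 := (map_ne_zero_iff _ toF_injective).2 hD
  have hD'F : toF D' ≠ 0 := (map_ne_zero_iff _ toF_injective).2 hD'
  rw [hDx.map_div _ hDF, hDxval, hDxval, div_eq_div_iff (pow_ne_zero 2 hDF) hD'F] at h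
  apply toF_injective
  simp only [map_mul, map_pow, map_sub]
  linear_combination -h

theorem degree_lt_of_mul_sq_eq {N D N' D' : Polynomial (Polynomial k)}
    (hND : N.degree < D.degree) (hD' : D' ≠ 0)
    (h : N' * D ^ 2 = (derivX N * D - N * derivX D) * D') : N'.degree < D'.degree := by
  rcases eq_or_ne N' 0 with rfl | hN'
  · exact bot_lt_iff_ne_bot.2 (degree_ne_bot.2 hD')
  have hD : D ≠ 0 := by rintro rfl; simp at hND
  rw [degree_eq_natDegree hD] at hND
  have hM : (derivX N * D - N * derivX D).degree < ↑(D.natDegree + D.natDegree) := by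
    refine (degree_sub_le _ _).trans_lt (max_lt ?_ ?_)
    · exact degree_mul_lt_of_degree_lt_of_natDegree_le
        ((degree_derivX_le N).trans_lt hND) le_rfl
    · exact degree_mul_lt_of_degree_lt_of_natDegree_le hND
        (natDegree_le_natDegree (degree_derivX_le D))
  have hM0 : derivX N * D - N * derivX D ≠ 0 := by
    rintro hM0
    rw [hM0, zero_mul] at h
    exact mul_ne_zero hN' (pow_ne_zero 2 hD) h
  have hdeg := congrArg natDegree h
  rw [natDegree_mul hN' (pow_ne_zero 2 hD), natDegree_pow, natDegree_mul hM0 hD'] at hdeg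
  have := (natDegree_lt_iff_degree_lt hM0).2 hM
  rw [degree_eq_natDegree hN', degree_eq_natDegree hD', Nat.cast_lt]
  omega

theorem degree_numerator_lt {Dx : RatFunc (RatFunc k) → RatFunc (RatFunc k)}
    (hDx : IsDeriv Dx) (hDxval : ∀ A, Dx (toF A) = toF (derivX A))
    {P Q T : Polynomial (Polynomial k)} (hQ : Q ≠ 0) (hT : T ≠ 0) (hPQ : P.degree < Q.degree)
    {N : ℕ → Polynomial (Polynomial k)}
    (hN : ∀ i : ℕ, Dx^[i] (toF P / toF Q) = toF (N i) / (toF Q * toF T ^ i)) (i : ℕ) :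
    (N i).degree < (Q * T ^ i).degree := by
  induction i with
  | zero =>
    have h0 := hN 0
    rw [Function.iterate_zero, id, pow_zero, mul_one,
      div_left_inj' ((map_ne_zero_iff _ toF_injective).2 hQ)] at h0
    simpa [← toF_injective h0] using hPQ
  | succ i ih =>
    refine degree_lt_of_mul_sq_eq ih (mul_ne_zero hQ (pow_ne_zero _ hT))
      (mul_sq_eq_of_derivation_div hDx hDxval (mul_ne_zero hQ (pow_ne_zero _ hT))
        (mul_ne_zero hQ (pow_ne_zero _ hT)) ?_)
    rw [map_mul, map_pow, map_mul, map_pow, ← hN, ← hN, Function.iterate_succ_apply']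

theorem degree_sum_C_mul_toKy_lt {Q T : Polynomial (Polynomial k)}
    {N : ℕ → Polynomial (Polynomial k)} (hQ : Q ≠ 0) (hT : T ≠ 0)
    (hN : ∀ i, (N i).degree < (Q * T ^ i).degree) {ρ : ℕ} (η : Fin (ρ + 1) → RatFunc k) :
    (∑ i : Fin (ρ + 1), C (η i) * toKy (N i * T ^ (ρ - i))).degree
      < (toKy Q * toKy T ^ ρ).degree := by
  rw [← map_pow, ← map_mul, degree_toKy]
  refine (degree_sum_le _ _).trans_lt ((Finset.sup_lt_iff
    (bot_lt_iff_ne_bot.2 (degree_ne_bot.2 (mul_ne_zero hQ (pow_ne_zero ρ hT))))).2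
      fun i _ => ?_)
  rw [← smul_eq_C_mul]
  refine (degree_smul_le _ _).trans_lt ?_
  rw [degree_toKy, ← pow_mul_pow_sub T (Nat.lt_succ_iff.1 i.2), ← mul_assoc, degree_mul,
    degree_mul (p := Q * T ^ (i : ℕ))]
  exact WithBot.add_lt_add_right (degree_ne_bot.2 (pow_ne_zero _ hT)) (hN i)

end BivariateDegrees

theorem stmt_14_general {k : Type*} [Field k] [CharZero k]
    (P Q : Polynomial (Polynomial k))
    (hQ : Q ≠ 0)
    (hPQdeg : P.degree < Q.degree)
    (Qs Qneg : Polynomial (Polynomial k))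
    (hQneg : Q = Qs * Qneg)
    (Dx : RatFunc (RatFunc k) → RatFunc (RatFunc k)) (hDx : IsDeriv Dx)
    (hDxval : ∀ A : Polynomial (Polynomial k), Dx (toF A) = toF (derivX A))
    (ts : Polynomial k) (Ts : Polynomial (Polynomial k))
    (hsplit : Qs = yToXY ts * Ts)
    (Nseq : ℕ → Polynomial (Polynomial k))
    (hNseq : ∀ i : ℕ, Dx^[i] (toF P / toF Q) = toF (Nseq i) / (toF Q * toF Ts ^ i))
    (ρ : ℕ) (η : Fin (ρ + 1) → RatFunc k)
    (Hp : Polynomial (Polynomial k))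
    (hHp : Hp * Qneg =
      -Polynomial.derivative Q - (ρ • (yToXY ts * Polynomial.derivative Ts)) * Qneg)
    (u : Polynomial (RatFunc k))
    (hu : ∑ i : Fin (ρ + 1),
        Polynomial.C (η i) * toKy (Nseq (i : ℕ) * Ts ^ (ρ - (i : ℕ))) =
      toKy Qs * Polynomial.derivative u +
        (Polynomial.derivative (toKy Qs) + toKy Hp) * u) :
    u.natDegree ≤ Qneg.natDegree + ρ * Ts.natDegree := by
  have hQs0 : Qs ≠ 0 := left_ne_zero_of_mul (hQneg ▸ hQ)
  have hTs0 : Ts ≠ 0 := right_ne_zero_of_mul (hsplit ▸ hQs0)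
  have hLdeg := degree_sum_C_mul_toKy_lt hQ hTs0
    (degree_numerator_lt hDx hDxval hQ hTs0 hPQdeg hNseq) η
  have hH := congrArg toKy hHp
  simp only [map_mul, map_sub, map_neg, map_nsmul, ← derivative_toKy] at hH
  have h := natDegree_solution_le_of_degree_lt ρ ((map_ne_zero_iff _ toKy_injective).2 hQ)
    (by rw [hQneg, map_mul]) (by rw [hsplit, map_mul]) hH hu hLdeg
  rwa [natDegree_toKy, natDegree_toKy] at h

/-- Lemma `le:degb`. Under Hypothesis (H) and with the notation of the
Almkvist–Zeilberger parameterisation (`Q = t·T`, `Q* = t*·T*`, `Nᵢ` the numerators of the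
derivatives, `H = −D_y(Q)/Q⁻ − ρ·t*·D_y(T*)`): any polynomial solution `u ∈ k(x)[y]` of
`∑ ηᵢ·Nᵢ·(T*)^{ρ−i} = Q*·D_y(u) + (D_y(Q*) + H)·u` satisfies
`deg_y(u) ≤ d_y⁻ + ρ·deg_y(T*)`. -/
theorem stmt_14 {k : Type*} [Field k] [CharZero k]
    (P Q : Polynomial (Polynomial k))
    (hP : P ≠ 0) (hQ : Q ≠ 0)
    (hPQdeg : P.degree < Q.degree)
    (hPQcop : IsRelPrime P Q)
    (hQprimY : Q.IsPrimitive)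
    (m : ℕ) (hm : 0 < m) (q : Polynomial k) (Qi : ℕ → Polynomial (Polynomial k))
    (hfac : Q = Polynomial.C q * ∏ i ∈ Finset.range m, Qi i ^ (i + 1))
    (hQiprim : ∀ i < m, (Qi i).IsPrimitive)
    (hQisqf : ∀ i < m, Squarefree (Qi i))
    (hQicop : ∀ i < m, ∀ j < m, i ≠ j → IsRelPrime (Qi i) (Qi j))
    (hQim : 0 < (Qi (m - 1)).natDegree)
    (Qs Qneg : Polynomial (Polynomial k))
    (hQs : Qs = ∏ i ∈ Finset.range m, Qi i)
    (hQneg : Q = Qs * Qneg)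
    (Dy : RatFunc (RatFunc k) → RatFunc (RatFunc k)) (hDy : IsDeriv Dy)
    (hDyval : ∀ A : Polynomial (RatFunc k), Dy (kyToF A) = kyToF (Polynomial.derivative A))
    (Dx : RatFunc (RatFunc k) → RatFunc (RatFunc k)) (hDx : IsDeriv Dx)
    (hDxval : ∀ A : Polynomial (Polynomial k), Dx (toF A) = toF (derivX A))
    (t : Polynomial k) (T : Polynomial (Polynomial k))
    (hQtT : Q = yToXY t * T)
    (hTprim : ∀ s : Polynomial k, yToXY s ∣ T → IsUnit s)
    (ts : Polynomial k) (Ts : Polynomial (Polynomial k))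
    (hts : ts ∣ t) (hTs : Ts ∣ T)
    (hsplit : Qs = yToXY ts * Ts)
    (Nseq : ℕ → Polynomial (Polynomial k))
    (hNseq : ∀ i : ℕ, Dx^[i] (toF P / toF Q) = toF (Nseq i) / (toF Q * toF Ts ^ i))
    (ρ : ℕ) (η : Fin (ρ + 1) → RatFunc k)
    (Hp : Polynomial (Polynomial k))
    (hHp : Hp * Qneg =
      -Polynomial.derivative Q - (ρ • (yToXY ts * Polynomial.derivative Ts)) * Qneg)
    (u : Polynomial (RatFunc k))
    (hu : ∑ i : Fin (ρ + 1),
        Polynomial.C (η i) * toKy (Nseq (i : ℕ) * Ts ^ (ρ - (i : ℕ))) =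
      toKy Qs * Polynomial.derivative u +
        (Polynomial.derivative (toKy Qs) + toKy Hp) * u) :
    u.natDegree ≤ Qneg.natDegree + ρ * Ts.natDegree :=
  stmt_14_general P Q hQ hPQdeg Qs Qneg hQneg Dx hDx hDxval ts Ts hsplit Nseq hNseq ρ η Hp hHp u hu
end
end

section
/- Let f be in k(x,y) and suppose that (c_{j,ℓ}) is a family of polynomials in k[x], indexed by pairs (j,ℓ) of natural numbers with j ≤ J and ℓ ≤ M, not all zero, such that Σ_{j,ℓ} c_{j,ℓ}·D_x^j(D_y^ℓ(f)) = 0 in k(x,y). Let r be the smallest ℓ such that c_{j,ℓ} ≠ 0 for some j. Then L = Σ_{j=0}^{J} c_{j,r}·D_x^j is a telescoper for f: L is a nonzero operator and there exists g in k(x,y) with Σ_{j=0}^{J} c_{j,r}·D_x^j(f) = D_y(g). In particular, f admits a telescoper of order at most J whose coefficients are polynomials in k[x] of degree at most max_{j,ℓ} deg_x(c_{j,ℓ}). -/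
open Polynomial

noncomputable section

/-!
`D_x` and `D_y` commute: their bracket is a derivation of `k(x,y)` vanishing on `k[x,y]`, hence
everywhere. As the `c_{j,ℓ}` are `D_y`-constants, the relation reads `∑_ℓ D_y^ℓ (L_ℓ f) = 0` with
`L_ℓ = ∑_j c_{j,ℓ} D_x^j`, and `L_ℓ = 0` for `ℓ < r`. So `S = ∑_m D_y^m (L_{r+m} f)` is killed by
`D_y^r`, while `S = L_r f + D_y(…)`. Finally, whatever `D_y^n` kills is a polynomial in `y`
(if `D_y (p/q) = 0` with `p, q` coprime, the Wronskian of `p, q` vanishes, so `q' = 0`), and in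
characteristic zero every polynomial in `y` is a `D_y`-derivative.
-/

theorem AddMonoidHom.iterate_map_sum {G : Type*} [AddCommMonoid G] (D : G →+ G) {ι : Type*}
    (s : Finset ι) (g : ι → G) (n : ℕ) : D^[n] (∑ i ∈ s, g i) = ∑ i ∈ s, D^[n] (g i) := by
  induction n with
  | zero => rfl
  | succ n ih => simp only [Function.iterate_succ_apply', ih, map_sum]

theorem AddMonoidHom.mem_range_of_sum_iterate_eq_zero {G : Type*} [AddCommGroup G] (D : G →+ G)
    (hker : ∀ n v, D^[n] v = 0 → v ∈ D.range) {L : ℕ → G} {r N : ℕ} (hrN : r < N)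
    (hL : ∀ ℓ < r, L ℓ = 0) (hsum : ∑ ℓ ∈ Finset.range N, D^[ℓ] (L ℓ) = 0) : L r ∈ D.range := by
  obtain ⟨n, rfl⟩ := Nat.exists_eq_add_of_lt hrN
  set t := ∑ m ∈ Finset.range n, D^[m] (L (r + (m + 1)))
  have hsplit : ∑ m ∈ Finset.range (n + 1), D^[m] (L (r + m)) = L r + D t := by
    rw [Finset.sum_range_succ', map_sum, add_comm]
    simp [Function.iterate_succ_apply']
  have hS : D^[r] (∑ m ∈ Finset.range (n + 1), D^[m] (L (r + m))) = 0 := by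
    have hlow : ∑ ℓ ∈ Finset.range r, D^[ℓ] (L ℓ) = 0 :=
      Finset.sum_eq_zero fun ℓ hℓ => by rw [hL ℓ (Finset.mem_range.mp hℓ), iterate_map_zero]
    rw [← hsum, add_assoc, Finset.sum_range_add _ r (n + 1), hlow, zero_add, D.iterate_map_sum]
    simp only [← Function.iterate_add_apply]
  obtain ⟨w, hw⟩ := hker r _ hS
  exact ⟨w - t, by rw [map_sub, hw, hsplit, add_sub_cancel_right]⟩

namespace IsDeriv

variable {F : Type*} [CommRing F] {D : F → F}

def toAddMonoidHom (hD : IsDeriv D) : F →+ F := AddMonoidHom.mk' D hD.1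

theorem map_sub (hD : IsDeriv D) (a b : F) : D (a - b) = D a - D b :=
  _root_.map_sub hD.toAddMonoidHom a b

theorem iterate_map_sum (hD : IsDeriv D) {ι : Type*} (s : Finset ι) (g : ι → F) (n : ℕ) :
    D^[n] (∑ i ∈ s, g i) = ∑ i ∈ s, D^[n] (g i) :=
  hD.toAddMonoidHom.iterate_map_sum s g n

theorem iterate_map_const_mul (hD : IsDeriv D) {c : F} (hc : D c = 0) (u : F) (n : ℕ) :
    D^[n] (c * u) = c * D^[n] u := by
  induction n generalizing u with
  | zero => rfl
  | succ n ih => rw [Function.iterate_succ_apply, hD.2, hc, mul_zero, add_zero, ih,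
      Function.iterate_succ_apply]

theorem bracket {D' : F → F} (hD : IsDeriv D) (hD' : IsDeriv D') :
    IsDeriv fun v => D (D' v) - D' (D v) := by
  refine ⟨fun a b => ?_, fun a b => ?_⟩
  · simp only [hD.1, hD'.1]
    ring
  · simp only [hD.1, hD.2, hD'.1, hD'.2]
    ring

theorem eq_zero_of_mul_eq {F : Type*} [Field F] {D : F → F} (hD : IsDeriv D) {u a b : F}
    (hb : b ≠ 0) (h : u * b = a) (ha : D a = 0) (hDb : D b = 0) : D u = 0 := by
  have := hD.2 u b
  rw [h, ha, hDb, mul_zero, zero_add] at this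
  exact (mul_eq_zero.mp this.symm).resolve_left hb

end IsDeriv

section RationalFunctions

variable {k : Type*} [Field k]

theorem derivX_coeff (Q : Polynomial (Polynomial k)) (n : ℕ) :
    (derivX Q).coeff n = derivative (Q.coeff n) := by
  rw [derivX, Polynomial.sum_def, finsetSum_coeff]
  simp only [coeff_C_mul_X_pow]
  rw [Finset.sum_ite_eq]
  split_ifs with h
  · rfl
  · rw [notMem_support_iff.mp h, derivative_zero]

theorem derivX_derivative (Q : Polynomial (Polynomial k)) :
    derivX (derivative Q) = derivative (derivX Q) := by
  ext1 n
  simp [derivX_coeff, coeff_derivative, derivative_mul]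

theorem exists_toF_eq_toF_C_mul_kyToF (P : Polynomial (RatFunc k)) :
    ∃ (A : Polynomial (Polynomial k)) (b : Polynomial k), b ≠ 0 ∧ toF A = toF (C b) * kyToF P := by
  obtain ⟨b, hb, hA⟩ := IsLocalization.integerNormalization_spec (nonZeroDivisors (Polynomial k)) P
  refine ⟨IsLocalization.integerNormalization (nonZeroDivisors (Polynomial k)) P, b,
    nonZeroDivisors.ne_zero hb, ?_⟩
  change kyToF (toKy _) = kyToF (toKy (C b)) * kyToF P
  rw [← map_mul, toKy, coe_mapRingHom, map_C, ← smul_eq_C_mul, algebraMap_smul, hA]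

theorem exists_mul_toF_eq_toF (v : RatFunc (RatFunc k)) :
    ∃ A B : Polynomial (Polynomial k), toF B ≠ 0 ∧ v * toF B = toF A := by
  have hden : kyToF v.denom ≠ 0 := RatFunc.algebraMap_ne_zero (RatFunc.denom_ne_zero v)
  have hv : v * kyToF v.denom = kyToF v.num :=
    ((div_eq_iff hden).mp (RatFunc.num_div_denom v)).symm
  obtain ⟨A, a, ha, hA⟩ := exists_toF_eq_toF_C_mul_kyToF v.num
  obtain ⟨B, b, hb, hB⟩ := exists_toF_eq_toF_C_mul_kyToF v.denom
  have hC : ∀ {c : Polynomial k}, c ≠ 0 → toF (C c) ≠ 0 := fun hc =>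
    (map_ne_zero_iff _ toF_injective).mpr (C_ne_zero.mpr hc)
  refine ⟨A * C b, B * C a, ?_, ?_⟩
  · rw [map_mul, hB]
    exact mul_ne_zero (mul_ne_zero (hC hb) hden) (hC ha)
  · rw [map_mul, map_mul, hA, hB]
    linear_combination toF (C a) * toF (C b) * hv

theorem IsDeriv.eq_zero_of_forall_toF {Δ : RatFunc (RatFunc k) → RatFunc (RatFunc k)}
    (hΔ : IsDeriv Δ) (h : ∀ A, Δ (toF A) = 0) (v : RatFunc (RatFunc k)) : Δ v = 0 := by
  obtain ⟨A, B, hB, hv⟩ := exists_mul_toF_eq_toF v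
  exact hΔ.eq_zero_of_mul_eq hB hv (h A) (h B)

variable {Dy : RatFunc (RatFunc k) → RatFunc (RatFunc k)}
  (hDyval : ∀ A : Polynomial (RatFunc k), Dy (kyToF A) = kyToF (derivative A))
include hDyval

theorem Dy_toF (A : Polynomial (Polynomial k)) : Dy (toF A) = toF (derivative A) := by
  change Dy (kyToF (toKy A)) = kyToF (toKy (derivative A))
  rw [hDyval, toKy, coe_mapRingHom, derivative_map]

theorem commute_of_isDeriv {Dx : RatFunc (RatFunc k) → RatFunc (RatFunc k)} (hDx : IsDeriv Dx)
    (hDy : IsDeriv Dy) (hDxval : ∀ A : Polynomial (Polynomial k), Dx (toF A) = toF (derivX A)) :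
    Function.Commute Dx Dy := fun v =>
  sub_eq_zero.mp <| (hDx.bracket hDy).eq_zero_of_forall_toF
    (fun A => by rw [Dy_toF hDyval, hDxval, hDxval, Dy_toF hDyval, derivX_derivative, sub_self]) v

end RationalFunctions

theorem Polynomial.derivative_surjective {F : Type*} [Field F] [CharZero F] :
    Function.Surjective (derivative : F[X] →ₗ[F] F[X]) := by
  intro P
  induction P using Polynomial.induction_on' with
  | add p q hp hq =>
    obtain ⟨p', rfl⟩ := hp
    obtain ⟨q', rfl⟩ := hq
    exact ⟨p' + q', map_add _ _ _⟩
  | monomial n a =>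
    refine ⟨monomial (n + 1) (a / (n + 1)), ?_⟩
    rw [derivative_monomial, Nat.add_sub_cancel, Nat.cast_add_one,
      div_mul_cancel₀ _ n.cast_add_one_ne_zero]

section Kernel

variable {k : Type*} [Field k] [CharZero k] {Dy : RatFunc (RatFunc k) → RatFunc (RatFunc k)}
  (hDy : IsDeriv Dy) (hDyval : ∀ A : Polynomial (RatFunc k), Dy (kyToF A) = kyToF (derivative A))
include hDy hDyval

theorem exists_kyToF_eq_of_Dy_eq_zero {v : RatFunc (RatFunc k)} (hv : Dy v = 0) :
    ∃ P, v = kyToF P := by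
  have hinj : Function.Injective (kyToF (k := k)) := RatFunc.algebraMap_injective _
  have hq : kyToF v.denom ≠ 0 := RatFunc.algebraMap_ne_zero (RatFunc.denom_ne_zero v)
  have hvq : v * kyToF v.denom = kyToF v.num :=
    ((div_eq_iff hq).mp (RatFunc.num_div_denom v)).symm
  have hvq' : v * kyToF (derivative v.denom) = kyToF (derivative v.num) := by
    have := congrArg Dy hvq
    rwa [hDy.2, hv, hDyval, hDyval, mul_zero, add_zero] at this
  have hW : wronskian v.num v.denom = 0 := hinj <| by
    rw [wronskian, map_sub, map_mul, map_mul, ← hvq, ← hvq', map_zero]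
    ring
  obtain ⟨-, hq'⟩ := (RatFunc.isCoprime_num_denom v).wronskian_eq_zero_iff.mp hW
  rw [eq_C_of_derivative_eq_zero hq'] at hq hvq
  have hinv : kyToF (C (v.denom.coeff 0)⁻¹) * kyToF (C (v.denom.coeff 0)) = 1 := by
    rw [← map_mul, ← C_mul, inv_mul_cancel₀ fun h => hq (by rw [h, C_0, map_zero]), C_1, map_one]
  refine ⟨C (v.denom.coeff 0)⁻¹ * v.num, ?_⟩
  rw [map_mul, ← hvq]
  linear_combination (-v) * hinv

theorem exists_kyToF_eq_of_Dy_eq_kyToF {v : RatFunc (RatFunc k)} {P : Polynomial (RatFunc k)}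
    (hv : Dy v = kyToF P) : ∃ Q, v = kyToF Q := by
  obtain ⟨Q₀, rfl⟩ := derivative_surjective P
  obtain ⟨Q₁, hQ₁⟩ := exists_kyToF_eq_of_Dy_eq_zero hDy hDyval (v := v - kyToF Q₀) <| by
    rw [hDy.map_sub, hv, hDyval, sub_self]
  exact ⟨Q₁ + Q₀, by rw [map_add, ← hQ₁, sub_add_cancel]⟩

theorem exists_kyToF_eq_of_iterate_Dy_eq_zero {n : ℕ} {v : RatFunc (RatFunc k)}
    (hv : Dy^[n] v = 0) : ∃ P, v = kyToF P := by
  induction n generalizing v with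
  | zero => exact ⟨0, by rw [map_zero]; exact hv⟩
  | succ n ih =>
    obtain ⟨P, hP⟩ := ih hv
    exact exists_kyToF_eq_of_Dy_eq_kyToF hDy hDyval hP

theorem exists_Dy_eq_of_iterate_Dy_eq_zero {n : ℕ} {v : RatFunc (RatFunc k)}
    (hv : Dy^[n] v = 0) : ∃ w, Dy w = v := by
  obtain ⟨P, rfl⟩ := exists_kyToF_eq_of_iterate_Dy_eq_zero hDy hDyval hv
  obtain ⟨Q, rfl⟩ := derivative_surjective P
  exact ⟨kyToF Q, hDyval Q⟩

end Kernel

theorem stmt_19_general {k : Type*} [Field k] [CharZero k]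
    (f : RatFunc (RatFunc k))
    (Dy : RatFunc (RatFunc k) → RatFunc (RatFunc k)) (hDy : IsDeriv Dy)
    (hDyval : ∀ A : Polynomial (RatFunc k), Dy (kyToF A) = kyToF (Polynomial.derivative A))
    (Dx : RatFunc (RatFunc k) → RatFunc (RatFunc k)) (hDx : IsDeriv Dx)
    (hDxval : ∀ A : Polynomial (Polynomial k), Dx (toF A) = toF (derivX A))
    (J M : ℕ) (c : ℕ → ℕ → Polynomial k)
    (hrel : ∑ j ∈ Finset.range (J + 1), ∑ ℓ ∈ Finset.range (M + 1),
      toF (Polynomial.C (c j ℓ)) * Dx^[j] (Dy^[ℓ] f) = 0)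
    (r : ℕ) (hrM : r ≤ M)
    (hr1 : ∃ j ≤ J, c j r ≠ 0)
    (hr2 : ∀ ℓ < r, ∀ j ≤ J, c j ℓ = 0) :
    (∃ j ≤ J, c j r ≠ 0) ∧
    (∃ g : RatFunc (RatFunc k),
      ∑ j ∈ Finset.range (J + 1), toF (Polynomial.C (c j r)) * Dx^[j] f = Dy g) ∧
    (∀ j ≤ J, (c j r).natDegree ≤
      (Finset.range (J + 1) ×ˢ Finset.range (M + 1)).sup fun w => (c w.1 w.2).natDegree) := by
  have hcomm := commute_of_isDeriv hDyval hDx hDy hDxval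
  set L : ℕ → RatFunc (RatFunc k) := fun ℓ =>
    ∑ j ∈ Finset.range (J + 1), toF (C (c j ℓ)) * Dx^[j] f
  have hsum : ∑ ℓ ∈ Finset.range (M + 1), Dy^[ℓ] (L ℓ) = 0 := by
    rw [← hrel, Finset.sum_comm]
    refine Finset.sum_congr rfl fun ℓ _ => ?_
    rw [hDy.iterate_map_sum]
    refine Finset.sum_congr rfl fun j _ => ?_
    rw [hDy.iterate_map_const_mul (by rw [Dy_toF hDyval, derivative_C, map_zero]),
      (hcomm.iterate_iterate j ℓ).eq]
  have hL : ∀ ℓ < r, L ℓ = 0 := fun ℓ hℓ => Finset.sum_eq_zero fun j hj => by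
    rw [hr2 ℓ hℓ j (Nat.lt_succ_iff.mp (Finset.mem_range.mp hj)), C_0, map_zero, zero_mul]
  obtain ⟨g, hg⟩ := hDy.toAddMonoidHom.mem_range_of_sum_iterate_eq_zero
    (fun _ _ hv => exists_Dy_eq_of_iterate_Dy_eq_zero hDy hDyval hv) (Nat.lt_succ_of_le hrM) hL hsum
  refine ⟨hr1, ⟨g, hg.symm⟩, fun j hj =>
    Finset.le_sup (f := fun w : ℕ × ℕ => (c w.1 w.2).natDegree) (b := (j, r)) ?_⟩
  simp only [Finset.mem_product, Finset.mem_range]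
  omega

/-- from an annihilating operator to a telescoper. Suppose
`∑_{j ≤ J, ℓ ≤ M} c_{j,ℓ}·D_x^j(D_y^ℓ(f)) = 0` with `c_{j,ℓ} ∈ k[x]` not all zero, and let
`r` be the smallest `ℓ` such that `c_{j,ℓ} ≠ 0` for some `j`. Then `L = ∑_j c_{j,r}·D_x^j` is
a (nonzero) telescoper for `f`: there is `g ∈ k(x,y)` with `∑_j c_{j,r}·D_x^j(f) = D_y(g)`;
in particular `f` admits a telescoper of order at most `J` whose coefficients are polynomials
in `k[x]` of degree at most `max_{j,ℓ} deg_x(c_{j,ℓ})`. -/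
theorem stmt_19 {k : Type*} [Field k] [CharZero k]
    (f : RatFunc (RatFunc k))
    (Dy : RatFunc (RatFunc k) → RatFunc (RatFunc k)) (hDy : IsDeriv Dy)
    (hDyval : ∀ A : Polynomial (RatFunc k), Dy (kyToF A) = kyToF (Polynomial.derivative A))
    (Dx : RatFunc (RatFunc k) → RatFunc (RatFunc k)) (hDx : IsDeriv Dx)
    (hDxval : ∀ A : Polynomial (Polynomial k), Dx (toF A) = toF (derivX A))
    (J M : ℕ) (c : ℕ → ℕ → Polynomial k)
    (hne : ∃ j ≤ J, ∃ ℓ ≤ M, c j ℓ ≠ 0)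
    (hrel : ∑ j ∈ Finset.range (J + 1), ∑ ℓ ∈ Finset.range (M + 1),
      toF (Polynomial.C (c j ℓ)) * Dx^[j] (Dy^[ℓ] f) = 0)
    (r : ℕ) (hrM : r ≤ M)
    (hr1 : ∃ j ≤ J, c j r ≠ 0)
    (hr2 : ∀ ℓ < r, ∀ j ≤ J, c j ℓ = 0) :
    (∃ j ≤ J, c j r ≠ 0) ∧
    (∃ g : RatFunc (RatFunc k),
      ∑ j ∈ Finset.range (J + 1), toF (Polynomial.C (c j r)) * Dx^[j] f = Dy g) ∧
    (∀ j ≤ J, (c j r).natDegree ≤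
      (Finset.range (J + 1) ×ˢ Finset.range (M + 1)).sup fun w => (c w.1 w.2).natDegree) :=
  stmt_19_general f Dy hDy hDyval Dx hDx hDxval J M c hrel r hrM hr1 hr2
end
end
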